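/- arXiv:2510.26504 — 6 statements merged into one kernel-verified Lean document; each statement's English description precedes it below -/
import Mathlib

section
/- Let Q = {x ∈ V : ℓ₁(x) ≥ 0, …, ℓ_r(x) ≥ 0} and Q' = {x ∈ V' : ℓ'₁(x) ≥ 0, …, ℓ'_s(x) ≥ 0} be quadrants in finite-dimensional real vector spaces, defined by linearly independent families of linear forms. If f : Q → Q' is a diffeomorphism, then for every x ∈ Q the index of x in Q equals the index of f(x) in Q', i.e. #{i : ℓ_i(x) = 0} = #{j : ℓ'_j(f(x)) = 0}. In particular r = s. -/
/-!
The derivative of `f` at `x ∈ Q` is a linear isomorphism: `Q` is convex with nonempty interior, so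
derivatives within `Q` are unique and the chain rule applies to `g ∘ f = id`. It carries the face
subspace `{v | ℓ i v = 0 whenever ℓ i x = 0}` into the face subspace at `f x`: along such a `v` the
line through `x` stays in `Q` for small times of both signs, so every `ℓ' j ∘ f` vanishing at `x`
has a minimum there along the line and zero derivative in direction `v`. Together with the inverse
this identifies the two face subspaces, whose codimensions are the indices because the active forms
are linearly independent. Comparing the indices of `0`, `f 0` and `g 0` gives `r = s`.
-/

open Set

/-- A map `f` is weakly smooth on a subset `A` if it admits a smooth extension
to an open neighborhood of `A` (such a map is in particular continuous on `A`). -/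
def WeaklySmooth {E F : Type*} [NormedAddCommGroup E] [NormedSpace ℝ E]
    [NormedAddCommGroup F] [NormedSpace ℝ F] (A : Set E) (f : E → F) : Prop :=
  ∃ U : Set E, IsOpen U ∧ A ⊆ U ∧
    ∃ g : E → F, ContDiffOn ℝ (⊤ : ℕ∞) g U ∧ EqOn f g A

open Filter Topology Module

section LinearAlgebra

variable {ι K V : Type*} [Field K] [AddCommGroup V] [Module K V]

def faceDirections (ℓ : ι → Dual K V) (x : V) : Submodule K V :=
  (Submodule.span K (ℓ '' {i | ℓ i x = 0})).dualCoannihilator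

theorem mem_faceDirections {ℓ : ι → Dual K V} {x v : V} :
    v ∈ faceDirections ℓ x ↔ ∀ i, ℓ i x = 0 → ℓ i v = 0 := by
  rw [faceDirections, ← SetLike.mem_coe, Submodule.coe_dualCoannihilator_span]
  simp

variable [FiniteDimensional K V]

theorem LinearIndependent.finrank_faceDirections_add_ncard [Finite ι] {ℓ : ι → Dual K V}
    (hℓ : LinearIndependent K ℓ) (x : V) :
    finrank K (faceDirections ℓ x) + {i | ℓ i x = 0}.ncard = finrank K V := by
  classical
  have := Fintype.ofFinite ι
  set s := {i | ℓ i x = 0}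
  have hspan : finrank K (Submodule.span K (ℓ '' s)) = s.ncard := by
    rw [image_eq_range]
    exact (finrank_span_eq_card (hℓ.comp _ Subtype.val_injective)).trans
      (Nat.card_eq_fintype_card.symm.trans (Nat.card_coe_set_eq s))
  rw [faceDirections, ← hspan, add_comm, Subspace.finrank_add_finrank_dualCoannihilator_eq]

theorem LinearIndependent.exists_forall_apply_eq_one {ℓ : ι → Dual K V}
    (hℓ : LinearIndependent K ℓ) : ∃ v : V, ∀ i, ℓ i v = 1 := by
  obtain ⟨φ, hφ⟩ := exists_dual_forall_apply_eq_one (hℓ.linearIndepOn (s := univ))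
  exact ⟨(evalEquiv K V).symm φ, fun i => by simpa using hφ i (mem_univ i)⟩

end LinearAlgebra

theorem HasFDerivWithinAt.comp_eq_id_of_leftInvOn {𝕜 E F : Type*} [NontriviallyNormedField 𝕜]
    [NormedAddCommGroup E] [NormedSpace 𝕜 E] [NormedAddCommGroup F] [NormedSpace 𝕜 F]
    {s : Set E} {t : Set F} {f : E → F} {g : F → E} {f' : E →L[𝕜] F} {g' : F →L[𝕜] E} {x : E}
    (hg : HasFDerivWithinAt g g' t (f x)) (hf : HasFDerivWithinAt f f' s x) (hst : MapsTo f s t)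
    (hgf : LeftInvOn g f s) (hs : UniqueDiffWithinAt 𝕜 s x) (hx : x ∈ s) :
    g'.comp f' = ContinuousLinearMap.id 𝕜 E :=
  hs.eq ((hg.comp x hf hst).congr' (fun _ hy => (hgf hy).symm) hx)
    (hasFDerivWithinAt_id x s)

theorem WeaklySmooth.exists_hasFDerivWithinAt {E F : Type*} [NormedAddCommGroup E]
    [NormedSpace ℝ E] [NormedAddCommGroup F] [NormedSpace ℝ F] {A : Set E} {f : E → F}
    (hf : WeaklySmooth A f) {x : E} (hx : x ∈ A) :
    ∃ f' : E →L[ℝ] F, HasFDerivWithinAt f f' A x := by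
  obtain ⟨U, hU, hAU, F, hF, hfF⟩ := hf
  have hFx : DifferentiableAt ℝ F x :=
    (hF.contDiffAt (hU.mem_nhds (hAU hx))).differentiableAt (by simp)
  exact ⟨_, hFx.hasFDerivAt.hasFDerivWithinAt.congr' hfF hx⟩

section Quadrant

variable {ι ι' V V' : Type*} [NormedAddCommGroup V] [NormedSpace ℝ V]
  [NormedAddCommGroup V'] [NormedSpace ℝ V']

def quadrant (ℓ : ι → V →ₗ[ℝ] ℝ) : Set V := {x | ∀ i, 0 ≤ ℓ i x}

noncomputable def quadrantIndex (ℓ : ι → V →ₗ[ℝ] ℝ) (x : V) : ℕ := {i | ℓ i x = 0}.ncard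

theorem zero_mem_quadrant (ℓ : ι → V →ₗ[ℝ] ℝ) : 0 ∈ quadrant ℓ := fun i => by simp

theorem convex_quadrant (ℓ : ι → V →ₗ[ℝ] ℝ) : Convex ℝ (quadrant ℓ) := by
  intro x hx y hy a b ha hb _ i
  simpa using add_nonneg (mul_nonneg ha (hx i)) (mul_nonneg hb (hy i))

theorem quadrantIndex_zero (ℓ : ι → V →ₗ[ℝ] ℝ) : quadrantIndex ℓ 0 = Nat.card ι := by
  simp [quadrantIndex]

variable [Finite ι]

theorem quadrantIndex_le (ℓ : ι → V →ₗ[ℝ] ℝ) (x : V) : quadrantIndex ℓ x ≤ Nat.card ι :=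
  ncard_le_card _

theorem uniqueDiffOn_quadrant [FiniteDimensional ℝ V] {ℓ : ι → V →ₗ[ℝ] ℝ}
    (hℓ : LinearIndependent ℝ ℓ) : UniqueDiffOn ℝ (quadrant ℓ) := by
  obtain ⟨v, hv⟩ := hℓ.exists_forall_apply_eq_one
  have hopen : IsOpen {x : V | ∀ i, 0 < ℓ i x} := by
    simp only [ofPred_forall]
    exact isOpen_iInter_of_finite fun i =>
      isOpen_lt continuous_const (ℓ i).continuous_of_finiteDimensional
  refine uniqueDiffOn_convex (convex_quadrant ℓ)
    ⟨v, mem_interior.2 ⟨_, fun x hx i => (hx i).le, hopen, fun i => ?_⟩⟩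
  simp [hv i]

theorem eventually_add_smul_mem_quadrant {ℓ : ι → V →ₗ[ℝ] ℝ} {x v : V} (hx : x ∈ quadrant ℓ)
    (hv : v ∈ faceDirections ℓ x) : ∀ᶠ t in 𝓝 (0 : ℝ), x + t • v ∈ quadrant ℓ := by
  simp only [quadrant, mem_ofPred_eq, eventually_all, map_add, map_smul, smul_eq_mul]
  intro i
  rcases (hx i).eq_or_lt with hi | hi
  · exact Eventually.of_forall fun t => by simp [← hi, mem_faceDirections.1 hv i hi.symm]
  · have hline : ContinuousAt (fun t : ℝ => ℓ i x + t * ℓ i v) 0 := by fun_prop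
    filter_upwards [continuousAt_const.eventually_lt hline (by simpa using hi)] with t ht
    exact ht.le

variable [FiniteDimensional ℝ V']

theorem HasFDerivWithinAt.mapsTo_faceDirections {ℓ : ι → V →ₗ[ℝ] ℝ} {ℓ' : ι' → V' →ₗ[ℝ] ℝ}
    {f : V → V'} {f' : V →L[ℝ] V'} {x : V} (hf : HasFDerivWithinAt f f' (quadrant ℓ) x)
    (hfQ : MapsTo f (quadrant ℓ) (quadrant ℓ')) (hx : x ∈ quadrant ℓ) :
    MapsTo f' (faceDirections ℓ x) (faceDirections ℓ' (f x)) := by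
  intro v hv
  refine mem_faceDirections.2 fun j hj => ?_
  have hmin : IsMinOn (fun y => ℓ' j (f y)) (quadrant ℓ) x :=
    isMinOn_iff.2 fun y hy => hj ▸ hfQ hy j
  have hderiv : HasLineDerivWithinAt ℝ (fun y => ℓ' j (f y)) (ℓ' j (f' v)) (quadrant ℓ) x v :=
    ((ℓ' j).toContinuousLinearMap.hasFDerivAt.comp_hasFDerivWithinAt x hf).hasLineDerivWithinAt v
  exact hmin.hasLineDerivWithinAt_eq_zero hderiv (eventually_add_smul_mem_quadrant hx hv)

end Quadrant

section Diffeomorphism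

variable {ι ι' V V' : Type*} [NormedAddCommGroup V] [NormedSpace ℝ V] [FiniteDimensional ℝ V]
  [NormedAddCommGroup V'] [NormedSpace ℝ V'] [FiniteDimensional ℝ V'] [Finite ι] [Finite ι']
  {ℓ : ι → V →ₗ[ℝ] ℝ} {ℓ' : ι' → V' →ₗ[ℝ] ℝ} {f : V → V'} {g : V' → V}

theorem quadrantIndex_apply_eq (hℓ : LinearIndependent ℝ ℓ) (hℓ' : LinearIndependent ℝ ℓ')
    (hf : WeaklySmooth (quadrant ℓ) f) (hg : WeaklySmooth (quadrant ℓ') g)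
    (hfQ : MapsTo f (quadrant ℓ) (quadrant ℓ')) (hgQ : MapsTo g (quadrant ℓ') (quadrant ℓ))
    (hgf : LeftInvOn g f (quadrant ℓ)) (hfg : LeftInvOn f g (quadrant ℓ'))
    {x : V} (hx : x ∈ quadrant ℓ) : quadrantIndex ℓ' (f x) = quadrantIndex ℓ x := by
  obtain ⟨T, hT⟩ := hf.exists_hasFDerivWithinAt hx
  obtain ⟨S, hS⟩ := hg.exists_hasFDerivWithinAt (hfQ hx)
  have hT' : HasFDerivWithinAt f T (quadrant ℓ) (g (f x)) := by rwa [hgf hx]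
  have hST := hS.comp_eq_id_of_leftInvOn hT hfQ hgf (uniqueDiffOn_quadrant hℓ x hx) hx
  have hTS := hT'.comp_eq_id_of_leftInvOn hS hgQ hfg (uniqueDiffOn_quadrant hℓ' _ (hfQ hx))
    (hfQ hx)
  let e : V ≃L[ℝ] V' := .equivOfInverse T S (fun v => congr($hST v)) (fun w => congr($hTS w))
  have hface : (faceDirections ℓ x).map (e : V →ₗ[ℝ] V') = faceDirections ℓ' (f x) := by
    refine le_antisymm (Submodule.map_le_iff_le_comap.2 (hT.mapsTo_faceDirections hfQ hx))
      fun w hw => ⟨S w, ?_, congr($hTS w)⟩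
    simpa [hgf hx] using hS.mapsTo_faceDirections hgQ (hfQ hx) hw
  have hV := hℓ.finrank_faceDirections_add_ncard x
  have hV' := hℓ'.finrank_faceDirections_add_ncard (f x)
  rw [← hface, LinearEquiv.finrank_map_eq e.toLinearEquiv, ← e.toLinearEquiv.finrank_eq] at hV'
  rw [quadrantIndex, quadrantIndex]
  omega

end Diffeomorphism

/-- A diffeomorphism between quadrants preserves the index of points:
`#{i : ℓ i x = 0} = #{j : ℓ' j (f x) = 0}`; in particular the number of defining
linear forms is the same on both sides. -/
theorem quadrant_diffeo_preserves_index
    {V V' : Type*} [NormedAddCommGroup V] [NormedSpace ℝ V] [FiniteDimensional ℝ V]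
    [NormedAddCommGroup V'] [NormedSpace ℝ V'] [FiniteDimensional ℝ V']
    {r s : ℕ} (ℓ : Fin r → V →ₗ[ℝ] ℝ) (ℓ' : Fin s → V' →ₗ[ℝ] ℝ)
    (hℓ : LinearIndependent ℝ ℓ) (hℓ' : LinearIndependent ℝ ℓ')
    (Q : Set V) (Q' : Set V')
    (hQ : Q = {x | ∀ i, 0 ≤ ℓ i x}) (hQ' : Q' = {y | ∀ j, 0 ≤ ℓ' j y})
    (f : V → V') (g : V' → V)
    (hf : WeaklySmooth Q f) (hg : WeaklySmooth Q' g)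
    (hfQ : MapsTo f Q Q') (hgQ : MapsTo g Q' Q)
    (hgf : ∀ x ∈ Q, g (f x) = x) (hfg : ∀ y ∈ Q', f (g y) = y) :
    (∀ x ∈ Q, {i | ℓ i x = 0}.ncard = {j | ℓ' j (f x) = 0}.ncard) ∧ r = s := by
  subst hQ hQ'
  have hindex : ∀ x ∈ quadrant ℓ, quadrantIndex ℓ' (f x) = quadrantIndex ℓ x :=
    fun x => quadrantIndex_apply_eq hℓ hℓ' hf hg hfQ hgQ hgf hfg
  have hindex' : ∀ y ∈ quadrant ℓ', quadrantIndex ℓ (g y) = quadrantIndex ℓ' y :=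
    fun y => quadrantIndex_apply_eq hℓ' hℓ hg hf hgQ hfQ hfg hgf
  refine ⟨fun x hx => (hindex x hx).symm, le_antisymm ?_ ?_⟩
  · simpa [quadrantIndex_zero, hindex 0 (zero_mem_quadrant ℓ)] using quadrantIndex_le ℓ' (f 0)
  · simpa [quadrantIndex_zero, hindex' 0 (zero_mem_quadrant ℓ')] using quadrantIndex_le ℓ (g 0)
end

section
/- A linear isomorphism A ∈ GL(ℝ^n) restricts to a bijection of the quadrant ℝ^{p,q} = ℝ^p × ℝ_{≥0}^q onto itself if and only if A maps the set {x ∈ ℝ^{p,q} : all last q coordinates strictly positive} into itself and permutes, up to positive scalar composition, the defining linear forms (coordinate projections onto the last q coordinates). Moreover the set GL(ℝ^{p,q}) of such isomorphisms forms a subgroup of GL(ℝ^n). -/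
open Set

/-- Points of `ℝ^{p+q} = ℝ^p × ℝ^q`. -/
abbrev QPt (p q : ℕ) := (Fin p → ℝ) × (Fin q → ℝ)

/-- The quadrant `ℝ^{p,q} = ℝ^p × ℝ_{≥0}^q`. -/
def quadrantSet (p q : ℕ) : Set (QPt p q) := {x | ∀ i, 0 ≤ x.2 i}

/-- The subset of the quadrant where all the last `q` coordinates are strictly positive. -/
def posSet (p q : ℕ) : Set (QPt p q) := {x | ∀ i, 0 < x.2 i}

lemma quad_mk_mem {p q : ℕ} (v : Fin p → ℝ) : ((v, 0) : QPt p q) ∈ quadrantSet p q :=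
  fun _ => le_refl 0

lemma quad_single_mem {p q : ℕ} (j : Fin q) :
    ((0, Pi.single j 1) : QPt p q) ∈ quadrantSet p q := by
  intro k
  simp only [Pi.single_apply]
  split <;> norm_num

lemma pos_parts {a b : ℝ} (ha : 0 ≤ a) (hb : 0 ≤ b) (h : 0 < a * b) : 0 < a ∧ 0 < b := by
  constructor
  · rcases ha.lt_or_eq with h' | h'
    · exact h'
    · exfalso; rw [← h', zero_mul] at h; exact lt_irrefl 0 h
  · rcases hb.lt_or_eq with h' | h'
    · exact h'
    · exfalso; rw [← h', mul_zero] at h; exact lt_irrefl 0 h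

lemma bijOn_symm {p q : ℕ} (A : QPt p q ≃ₗ[ℝ] QPt p q)
    (hA : Set.BijOn A (quadrantSet p q) (quadrantSet p q)) :
    Set.BijOn A.symm (quadrantSet p q) (quadrantSet p q) := by
  refine ⟨fun y hy => ?_, A.symm.injective.injOn,
    fun x hx => ⟨A x, hA.mapsTo hx, A.symm_apply_apply x⟩⟩
  obtain ⟨x, hx, rfl⟩ := hA.surjOn hy
  simpa using hx

/-- A linear equiv preserving the quadrant kills the first factor on the last coordinates. -/
lemma fst_coords_vanish {p q : ℕ} (A : QPt p q ≃ₗ[ℝ] QPt p q)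
    (hA : Set.MapsTo A (quadrantSet p q) (quadrantSet p q)) (v : Fin p → ℝ) (i : Fin q) :
    (A (v, 0)).2 i = 0 := by
  have h1 : 0 ≤ (A (v, 0)).2 i := hA (quad_mk_mem v) i
  have h2 : 0 ≤ (A (-v, 0)).2 i := hA (quad_mk_mem (-v)) i
  have hneg : ((-v, 0) : QPt p q) = -(v, 0) := by
    ext <;> simp
  rw [hneg, map_neg] at h2
  simp only [Prod.snd_neg, Pi.neg_apply] at h2
  linarith

/-- Expansion of the last coordinates of `A x` in terms of the last coordinates of `x`. -/
lemma expand {p q : ℕ} (A : QPt p q ≃ₗ[ℝ] QPt p q)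
    (hA : Set.MapsTo A (quadrantSet p q) (quadrantSet p q)) (x : QPt p q) (i : Fin q) :
    (A x).2 i = ∑ j, (A (0, Pi.single j 1)).2 i * x.2 j := by
  have hx : x = (x.1, 0) + ∑ j, x.2 j • (((0 : Fin p → ℝ), Pi.single j (1 : ℝ)) : QPt p q) := by
    ext k
    · simp [Prod.fst_sum]
    · simp [Prod.snd_sum, Finset.sum_apply, Pi.smul_apply, smul_eq_mul, Pi.single_apply,
        mul_ite]
  conv_lhs => rw [hx]
  rw [map_add, map_sum]
  simp only [map_smul, Prod.snd_add, Pi.add_apply, Finset.sum_apply, Prod.snd_sum,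
    Prod.smul_snd, Pi.smul_apply, smul_eq_mul]
  rw [fst_coords_vanish A hA]
  simp [mul_comm]

/-- Forward direction: a quadrant bijection permutes the coordinate forms up to scale. -/
lemma forward {p q : ℕ} (A : QPt p q ≃ₗ[ℝ] QPt p q)
    (hA : Set.BijOn A (quadrantSet p q) (quadrantSet p q)) :
    ∃ σ : Equiv.Perm (Fin q), ∀ i, ∃ c : ℝ, 0 < c ∧
      ∀ x : QPt p q, (A x).2 i = c * x.2 (σ i) := by
  set C : Fin q → Fin q → ℝ := fun i j => (A (0, Pi.single j 1)).2 i with hC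
  set D : Fin q → Fin q → ℝ := fun i j => (A.symm (0, Pi.single j 1)).2 i with hD
  have hAsymm := bijOn_symm A hA
  have hCnn : ∀ i j, 0 ≤ C i j := fun i j => hA.mapsTo (quad_single_mem j) i
  have hDnn : ∀ i j, 0 ≤ D i j := fun i j => hAsymm.mapsTo (quad_single_mem j) i
  have hexp : ∀ (x : QPt p q) i, (A x).2 i = ∑ j, C i j * x.2 j :=
    fun x i => expand A hA.mapsTo x i
  have hCD : ∀ i i', ∑ j, C i j * D j i' = if i = i' then 1 else 0 := by
    intro i i'
    have := hexp (A.symm (0, Pi.single i' 1)) i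
    rw [A.apply_symm_apply] at this
    simp only [Pi.single_apply] at this
    rw [← this]
  -- pick the column of the nonzero entry in each row
  have hpick : ∀ i, ∃ j, 0 < C i j * D j i := by
    intro i
    by_contra h
    push_neg at h
    have hz : ∑ j, C i j * D j i = 0 := by
      refine Finset.sum_eq_zero fun j _ => le_antisymm (h j) (mul_nonneg (hCnn i j) (hDnn j i))
    rw [hCD i i] at hz
    simp at hz
  choose f hf using hpick
  have hfinj : Function.Injective f := by
    intro i i' hii'
    by_contra hne
    have hz : ∑ j, C i j * D j i' = 0 := by rw [hCD]; simp [hne]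
    have hterm : C i (f i) * D (f i) i' = 0 := by
      have := (Finset.sum_eq_zero_iff_of_nonneg
        (fun j _ => mul_nonneg (hCnn i j) (hDnn j i'))).mp hz (f i) (Finset.mem_univ _)
      exact this
    have h1 : 0 < C i (f i) := (pos_parts (hCnn i (f i)) (hDnn (f i) i) (hf i)).1
    have h2 : 0 < D (f i') i' := (pos_parts (hCnn i' (f i')) (hDnn (f i') i') (hf i')).2
    rw [hii'] at h1 hterm
    nlinarith
  let σ : Equiv.Perm (Fin q) := Equiv.ofBijective f (Finite.injective_iff_bijective.mp hfinj)
  have hσ : ∀ i, σ i = f i := fun i => rfl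
  refine ⟨σ, fun i => ⟨C i (σ i), ?_, fun x => ?_⟩⟩
  · rw [hσ]
    exact (pos_parts (hCnn i (f i)) (hDnn (f i) i) (hf i)).1
  · -- C i j = 0 for j ≠ σ i
    have hzero : ∀ j, j ≠ σ i → C i j = 0 := by
      intro j hj
      set i' := σ.symm j with hi'
      have hji' : σ i' = j := σ.apply_symm_apply j
      have hne : i ≠ i' := by
        intro h; apply hj; rw [h, hji']
      have hz : ∑ k, C i k * D k i' = 0 := by rw [hCD]; simp [hne]
      have hterm : C i j * D j i' = 0 :=
        (Finset.sum_eq_zero_iff_of_nonneg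
          (fun k _ => mul_nonneg (hCnn i k) (hDnn k i'))).mp hz j (Finset.mem_univ _)
      have hD2 : 0 < D j i' := by
        have := (pos_parts (hCnn i' (f i')) (hDnn (f i') i') (hf i')).2
        rwa [show f i' = j from (hσ i') ▸ hji'] at this
      rcases mul_eq_zero.mp hterm with h | h
      · exact h
      · exact absurd h (ne_of_gt hD2)
    rw [hexp x i, Finset.sum_eq_single (σ i)]
    · intro j _ hj
      rw [hzero j hj, zero_mul]
    · intro h; exact absurd (Finset.mem_univ _) h

/-- Converse: a permutation-with-positive-scales map is a quadrant bijection. -/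
lemma backward {p q : ℕ} (A : QPt p q ≃ₗ[ℝ] QPt p q) (σ : Equiv.Perm (Fin q))
    (h : ∀ i, ∃ c : ℝ, 0 < c ∧ ∀ x : QPt p q, (A x).2 i = c * x.2 (σ i)) :
    Set.BijOn A (quadrantSet p q) (quadrantSet p q) := by
  choose c hc hcx using h
  refine ⟨fun x hx i => ?_, A.injective.injOn, fun y hy => ⟨A.symm y, fun j => ?_, A.apply_symm_apply y⟩⟩
  · rw [hcx i x]
    exact mul_nonneg (hc i).le (hx (σ i))
  · have := hcx (σ.symm j) (A.symm y)
    rw [A.apply_symm_apply, σ.apply_symm_apply] at this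
    have hy' : 0 ≤ c (σ.symm j) * (A.symm y).2 j := this ▸ hy (σ.symm j)
    exact nonneg_of_mul_nonneg_right hy' (hc (σ.symm j))

/-- The subgroup of quadrant-preserving linear automorphisms. -/
noncomputable def quadGroup (p q : ℕ) : Subgroup (QPt p q ≃ₗ[ℝ] QPt p q) where
  carrier := {A | Set.BijOn A (quadrantSet p q) (quadrantSet p q)}
  one_mem' := by
    show Set.BijOn ⇑(1 : QPt p q ≃ₗ[ℝ] QPt p q) _ _
    have h1 : ⇑(1 : QPt p q ≃ₗ[ℝ] QPt p q) = id := rfl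
    rw [h1]
    exact Set.bijOn_id _
  mul_mem' := by
    intro a b ha hb
    show Set.BijOn ⇑(a * b) _ _
    have h1 : ⇑(a * b) = ⇑a ∘ ⇑b := rfl
    rw [h1]
    exact Set.BijOn.comp ha hb
  inv_mem' := by
    intro a ha
    show Set.BijOn ⇑(a⁻¹ : QPt p q ≃ₗ[ℝ] QPt p q) _ _
    have h1 : ⇑(a⁻¹ : QPt p q ≃ₗ[ℝ] QPt p q) = ⇑a.symm := rfl
    rw [h1]
    exact bijOn_symm a ha

/-- A linear isomorphism `A ∈ GL(ℝ^n)` (`n = p + q`) restricts to a bijection of the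
quadrant `ℝ^{p,q}` onto itself iff it maps the strictly positive locus into itself and
permutes the defining linear forms (the projections onto the last `q` coordinates) up to
composition with positive scalars.  Moreover, such isomorphisms form a subgroup of `GL(ℝ^n)`. -/
theorem quadrant_linear_auto_characterization (p q : ℕ) :
    (∀ A : QPt p q ≃ₗ[ℝ] QPt p q,
      Set.BijOn A (quadrantSet p q) (quadrantSet p q) ↔
        ((A '' posSet p q ⊆ posSet p q) ∧
          ∃ σ : Equiv.Perm (Fin q), ∀ i, ∃ c : ℝ, 0 < c ∧
            ∀ x : QPt p q, (A x).2 i = c * x.2 (σ i))) ∧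
    ∃ G : Subgroup (QPt p q ≃ₗ[ℝ] QPt p q),
      ∀ A : QPt p q ≃ₗ[ℝ] QPt p q,
        A ∈ G ↔ Set.BijOn A (quadrantSet p q) (quadrantSet p q) := by
  constructor
  · intro A
    constructor
    · intro hA
      obtain ⟨σ, hσ⟩ := forward A hA
      refine ⟨?_, σ, hσ⟩
      rintro y ⟨x, hx, rfl⟩
      intro i
      obtain ⟨cc, hcc, hccx⟩ := hσ i
      rw [hccx x]
      exact mul_pos hcc (hx (σ i))
    · rintro ⟨-, σ, hσ⟩
      exact backward A σ hσ
  · exact ⟨quadGroup p q, fun A => Iff.rfl⟩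
end

section
/- Let ι₁ : □^{p,Q₁} ↪ □^{p,q} and ι₂ : □^{p,Q₂} ↪ □^{p,q} be open rectilinear embeddings. If the images of the deepest strata intersect, i.e. ι₁(□^{p,Q₁}_{[Q₁]}) ∩ ι₂(□^{p,Q₂}_{[Q₂]}) ≠ ∅, then Q₁ = Q₂. -/
/-!
The `[0,1)`-coordinates of `□^{p,q}` are read off the image of a deepest stratum:
a coordinate `j` of the image vanishes exactly when `j ∈ Q`. If `j ∉ Q`, the source
coordinate ranges over `(-1,1)` and the image over a nonempty open interval inside
`[0,∞)`, so every value is positive. If `j ∈ Q`, the source point has `x_j = 0`, the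
minimum of `[0,1)`; were its image `y_j` positive, openness of the image would give image
points with `j`-th coordinate slightly below `y_j`, whose preimages would have `x_j < 0`.
-/

open Set

/-- Points of `ℝ^{p+q} = ℝ^p × ℝ^q`. -/
abbrev Pt (p q : ℕ) := (Fin p → ℝ) × (Fin q → ℝ)

/-- The cube `□^{p,Q} = (-1,1)^p × ∏ δ_i` where `δ_i = [0,1)` for `i ∈ Q`
and `δ_i = (-1,1)` otherwise. -/
def cube (p q : ℕ) (Q : Set (Fin q)) : Set (Pt p q) :=
  {x | (∀ i, x.1 i ∈ Ioo (-1 : ℝ) 1) ∧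
    ∀ j, (j ∈ Q → x.2 j ∈ Ico (0 : ℝ) 1) ∧ (j ∉ Q → x.2 j ∈ Ioo (-1 : ℝ) 1)}

/-- A rectilinear map of `ℝ^{p+q}`: composition of a coordinatewise dilation with
positive factors and a translation. -/
def IsRectilinear (p q : ℕ) (f : Pt p q → Pt p q) : Prop :=
  ∃ (a b : Fin p → ℝ) (c e : Fin q → ℝ),
    (∀ i, 0 < a i) ∧ (∀ j, 0 < c j) ∧
      ∀ x : Pt p q, f x = (fun i => a i * x.1 i + b i, fun j => c j * x.2 j + e j)

/-- An open rectilinear embedding `□^{p,Q'} ↪ □^{p,Q}`: the restriction of a rectilinear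
map sending `□^{p,Q'}` into `□^{p,Q}`, whose image is open in `□^{p,Q}`
(rectilinear maps are automatically injective). -/
def OpenRectEmb (p q : ℕ) (f : Pt p q → Pt p q) (Q' Q : Set (Fin q)) : Prop :=
  IsRectilinear p q f ∧ f '' cube p q Q' ⊆ cube p q Q ∧
    ∃ O : Set (Pt p q), IsOpen O ∧ f '' cube p q Q' = O ∩ cube p q Q

/-- The deepest stratum `□^{p,Q}_{[Q]}` of `□^{p,Q}`: the points whose coordinates
indexed by `Q` all vanish. -/
def deepStratum (p q : ℕ) (Q : Set (Fin q)) : Set (Pt p q) :=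
  {x ∈ cube p q Q | ∀ j ∈ Q, x.2 j = 0}

variable {p q : ℕ}

lemma IsRectilinear.snd_lt_snd_iff {f : Pt p q → Pt p q} (hf : IsRectilinear p q f)
    {x z : Pt p q} {j : Fin q} : (f z).2 j < (f x).2 j ↔ z.2 j < x.2 j := by
  obtain ⟨_, _, c, e, -, hc, hf_eq⟩ := hf
  rw [hf_eq, hf_eq, add_lt_add_iff_right, mul_lt_mul_iff_right₀ (hc j)]

lemma update_snd_mem_cube {Q : Set (Fin q)} {x : Pt p q} (hx : x ∈ cube p q Q) {j : Fin q}
    {t : ℝ} (ht : (j ∈ Q → t ∈ Ico (0 : ℝ) 1) ∧ (j ∉ Q → t ∈ Ioo (-1 : ℝ) 1)) :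
    (x.1, Function.update x.2 j t) ∈ cube p q Q := by
  refine ⟨hx.1, fun k => ?_⟩
  rcases eq_or_ne k j with rfl | hk
  · simpa only [Function.update_self] using ht
  · simpa only [Function.update_of_ne hk] using hx.2 k

lemma snd_pos_of_mem_cube_of_notMem {f : Pt p q → Pt p q} {Q Q' : Set (Fin q)}
    (hf : IsRectilinear p q f) (hsub : f '' cube p q Q ⊆ cube p q Q') {x : Pt p q}
    (hx : x ∈ cube p q Q) {j : Fin q} (hjQ : j ∉ Q) (hjQ' : j ∈ Q') : 0 < (f x).2 j := by
  have hxj := (hx.2 j).2 hjQ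
  set z : Pt p q := (x.1, Function.update x.2 j ((x.2 j - 1) / 2))
  have hz : z ∈ cube p q Q :=
    update_snd_mem_cube hx
      ⟨fun h => absurd h hjQ, fun _ => ⟨by linarith [hxj.1], by linarith [hxj.2]⟩⟩
  have hfz_nonneg : 0 ≤ (f z).2 j := (((hsub (mem_image_of_mem f hz)).2 j).1 hjQ').1
  have hzx : z.2 j < x.2 j := by
    change Function.update x.2 j ((x.2 j - 1) / 2) j < x.2 j
    rw [Function.update_self]
    linarith [hxj.1]
  exact hfz_nonneg.trans_lt (hf.snd_lt_snd_iff.2 hzx)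

lemma snd_eq_zero_of_mem_deepStratum {f : Pt p q → Pt p q} {Q Q' : Set (Fin q)}
    (hf : OpenRectEmb p q f Q Q') {x : Pt p q} (hx : x ∈ deepStratum p q Q) {j : Fin q}
    (hjQ : j ∈ Q) (hjQ' : j ∈ Q') : (f x).2 j = 0 := by
  obtain ⟨hrect, -, O, hO, himg⟩ := hf
  set y := f x
  have hy : y ∈ O ∩ cube p q Q' := himg ▸ mem_image_of_mem f hx.1
  have hyj := (hy.2.2 j).1 hjQ'
  by_contra hne
  have hpos : 0 < y.2 j := hyj.1.lt_of_ne' hne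
  set g : ℝ → Pt p q := fun t => (y.1, Function.update y.2 j t)
  have hg : Continuous g := continuous_const.prodMk (continuous_const.update j continuous_id)
  have hgy : g (y.2 j) = y := by simp only [g, Function.update_eq_self]
  have hgO : ∀ᶠ t in nhds (y.2 j), g t ∈ O :=
    hg.continuousAt.preimage_mem_nhds (by rw [hgy]; exact hO.mem_nhds hy.1)
  obtain ⟨t, htO, ht0, hty⟩ :=
    ((hgO.filter_mono nhdsWithin_le_nhds).and (Ioo_mem_nhdsLT hpos)).exists
  have hgt : g t ∈ f '' cube p q Q :=
    himg ▸ ⟨htO, update_snd_mem_cube hy.2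
      ⟨fun _ => ⟨ht0.le, hty.trans hyj.2⟩, fun h => absurd hjQ' h⟩⟩
  obtain ⟨z, hz, hfz⟩ := hgt
  have hzj : z.2 j < x.2 j := hrect.snd_lt_snd_iff.1 <| by
    rw [hfz]
    simpa only [g, Function.update_self] using hty
  exact absurd (hx.2 j hjQ ▸ hzj) (((hz.2 j).1 hjQ).1.not_gt)

lemma snd_eq_zero_iff_of_mem_deepStratum {f : Pt p q → Pt p q} {Q Q' : Set (Fin q)}
    (hf : OpenRectEmb p q f Q Q') {x : Pt p q} (hx : x ∈ deepStratum p q Q) {j : Fin q}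
    (hjQ' : j ∈ Q') : (f x).2 j = 0 ↔ j ∈ Q := by
  refine ⟨fun h => ?_, fun hjQ => snd_eq_zero_of_mem_deepStratum hf hx hjQ hjQ'⟩
  by_contra hjQ
  exact (snd_pos_of_mem_cube_of_notMem hf.1 hf.2.1 hx.1 hjQ hjQ').ne' h

/-- If the images of the deepest strata of two open rectilinear embeddings
`ι₁ : □^{p,Q₁} ↪ □^{p,q}` and `ι₂ : □^{p,Q₂} ↪ □^{p,q}` intersect, then `Q₁ = Q₂`. -/
theorem openRectEmb_deepStratum_inter_types_eq (p q : ℕ) (Q₁ Q₂ : Set (Fin q))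
    (f₁ f₂ : Pt p q → Pt p q)
    (h₁ : OpenRectEmb p q f₁ Q₁ Set.univ) (h₂ : OpenRectEmb p q f₂ Q₂ Set.univ)
    (hne : (f₁ '' deepStratum p q Q₁ ∩ f₂ '' deepStratum p q Q₂).Nonempty) :
    Q₁ = Q₂ := by
  obtain ⟨y, ⟨x₁, hx₁, rfl⟩, ⟨x₂, hx₂, hy⟩⟩ := hne
  ext j
  rw [← snd_eq_zero_iff_of_mem_deepStratum h₁ hx₁ (mem_univ j),
    ← snd_eq_zero_iff_of_mem_deepStratum h₂ hx₂ (mem_univ j), hy]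
end

section
/- For every point x ∈ □^{p,q} there exists a unique subset Q ⊆ {1,…,q} such that there is an open rectilinear embedding ι : □^{p,Q} ↪ □^{p,q} with x ∈ ι(□^{p,Q}_{[Q]}); namely, Q is exactly the set of indices i for which the (p+i)-th coordinate of x is 0. -/
open Set

/-!
A rectilinear map acts on each coordinate by an increasing affine map, so everything reduces
to one coordinate `j`. If `j ∉ Q`, the `j`-th factor `(-1,1)` of `□^{p,Q}` has no least point,
so its image cannot reach the face `x_j = 0`. If `j ∈ Q`, the factor `[0,1)` is mapped onto
`[e_j, e_j + c_j)`, which is open in `[0,1)` only if `e_j = 0`. Conversely, a chart centred at `x`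
is the identity in the coordinates where `x` vanishes and a small interval around `x` elsewhere.
-/

open Filter Topology Function

section

variable {p q : ℕ}

open Classical in
/-- The factor `δ_j` of the cube `□^{p,Q}`. -/
def cubeFactor (Q : Set (Fin q)) (j : Fin q) : Set ℝ :=
  if j ∈ Q then Ico 0 1 else Ioo (-1) 1

@[simp]
lemma cubeFactor_univ (j : Fin q) : cubeFactor univ j = Ico 0 1 := if_pos (mem_univ j)

lemma mem_cube_iff {Q : Set (Fin q)} {x : Pt p q} :
    x ∈ cube p q Q ↔ (∀ i, x.1 i ∈ Ioo (-1) 1) ∧ ∀ j, x.2 j ∈ cubeFactor Q j := by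
  refine and_congr_right fun _ => forall_congr' fun j => ?_
  by_cases hj : j ∈ Q <;> simp [cubeFactor, hj]

lemma zero_mem_cubeFactor (Q : Set (Fin q)) (j : Fin q) : 0 ∈ cubeFactor Q j := by
  unfold cubeFactor
  split_ifs <;> simp

lemma cube_eq_prod (Q : Set (Fin q)) :
    cube p q Q = univ.pi (fun _ => Ioo (-1) 1) ×ˢ univ.pi (cubeFactor Q) := by
  ext x
  simp [mem_cube_iff]

lemma update_mem_cube {Q : Set (Fin q)} {z : Pt p q} {j : Fin q} {t : ℝ}
    (hz : z ∈ cube p q Q) (ht : t ∈ cubeFactor Q j) : (z.1, update z.2 j t) ∈ cube p q Q := by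
  rw [mem_cube_iff] at hz ⊢
  refine ⟨hz.1, fun k => ?_⟩
  rcases eq_or_ne k j with rfl | hk
  · simpa using ht
  · simpa [hk] using hz.2 k

def rectMap (a b : Fin p → ℝ) (c e : Fin q → ℝ) : Pt p q → Pt p q :=
  Prod.map (Pi.map fun i t => a i * t + b i) (Pi.map fun j t => c j * t + e j)

variable {a b : Fin p → ℝ} {c e : Fin q → ℝ}

@[simp]
lemma rectMap_snd (x : Pt p q) (j : Fin q) : (rectMap a b c e x).2 j = c j * x.2 j + e j := rfl

lemma image_rectMap_cube (Q : Set (Fin q)) :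
    rectMap a b c e '' cube p q Q =
      univ.pi (fun i => (a i * · + b i) '' Ioo (-1) 1) ×ˢ
        univ.pi (fun j => (c j * · + e j) '' cubeFactor Q j) := by
  rw [cube_eq_prod, rectMap, prodMap_image_prod, piMap_image_pi (by simp),
    piMap_image_pi (by simp)]

lemma openRectEmb_rectMap {Q Q' : Set (Fin q)} (ha : ∀ i, 0 < a i) (hc : ∀ j, 0 < c j)
    {U : Fin p → Set ℝ} {V : Fin q → Set ℝ} (hU : ∀ i, IsOpen (U i)) (hV : ∀ j, IsOpen (V j))
    (hUa : ∀ i, (a i * · + b i) '' Ioo (-1) 1 = U i ∩ Ioo (-1) 1)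
    (hVc : ∀ j, (c j * · + e j) '' cubeFactor Q j = V j ∩ cubeFactor Q' j) :
    OpenRectEmb p q (rectMap a b c e) Q Q' := by
  have himg : rectMap a b c e '' cube p q Q = (univ.pi U ×ˢ univ.pi V) ∩ cube p q Q' := by
    rw [image_rectMap_cube]
    simp only [hUa, hVc, pi_inter_distrib, cube_eq_prod, prod_inter_prod]
  refine ⟨⟨a, b, c, e, ha, hc, fun _ => rfl⟩, himg ▸ inter_subset_right, _, ?_, himg⟩
  exact (isOpen_set_pi finite_univ fun i _ => hU i).prod
    (isOpen_set_pi finite_univ fun j _ => hV j)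

lemma rectMap_snd_pos {Q Q' : Set (Fin q)} {j : Fin q} {y : Pt p q} (hc : 0 < c j)
    (hsub : rectMap a b c e '' cube p q Q ⊆ cube p q Q') (hjQ' : j ∈ Q') (hjQ : j ∉ Q)
    (hy : y ∈ cube p q Q) : 0 < (rectMap a b c e y).2 j := by
  have hyj : y.2 j ∈ Ioo (-1) 1 := by simpa [cubeFactor, hjQ] using (mem_cube_iff.1 hy).2 j
  obtain ⟨t, ht1, hty⟩ := exists_between hyj.1
  have ht : t ∈ cubeFactor Q j := by simpa [cubeFactor, hjQ] using ⟨ht1, hty.trans hyj.2⟩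
  have hfy' := (mem_cube_iff.1 (hsub (mem_image_of_mem _ (update_mem_cube hy ht)))).2 j
  simp only [cubeFactor, hjQ', if_true, rectMap_snd, update_self, mem_Ico] at hfy'
  simp only [rectMap_snd]
  linarith [hfy'.1, mul_lt_mul_of_pos_left hty hc]

lemma rectMap_snd_eq_zero {Q : Set (Fin q)} {O : Set (Pt p q)} {j : Fin q} {y : Pt p q}
    (hc : 0 < c j) (hO : IsOpen O) (himg : rectMap a b c e '' cube p q Q = O ∩ cube p q univ)
    (hjQ : j ∈ Q) (hy : y ∈ cube p q Q) (hyj : y.2 j = 0) : (rectMap a b c e y).2 j = 0 := by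
  set x := rectMap a b c e y
  have hxe : x.2 j = e j := by simp [x, hyj]
  have hx : x ∈ O ∩ cube p q univ := himg ▸ mem_image_of_mem _ hy
  have hx01 : x.2 j ∈ Ico 0 1 := by simpa using (mem_cube_iff.1 hx.2).2 j
  by_contra hne
  have hpos : 0 < x.2 j := hx01.1.lt_of_ne' hne
  let g : ℝ → Pt p q := fun t => (x.1, update x.2 j t)
  have hg : Continuous g := by fun_prop
  have hgO : g ⁻¹' O ∈ 𝓝 (x.2 j) :=
    hg.continuousAt.preimage_mem_nhds (hO.mem_nhds (by simpa [g] using hx.1))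
  obtain ⟨t, htO, ht0, htx⟩ := Filter.nonempty_of_mem
    (inter_mem (mem_nhdsWithin_of_mem_nhds hgO) (Ioo_mem_nhdsLT hpos))
  have hgt : g t ∈ cube p q univ :=
    update_mem_cube hx.2 (by simpa using ⟨ht0.le, htx.trans hx01.2⟩)
  obtain ⟨z, hz, hzt⟩ : g t ∈ rectMap a b c e '' cube p q Q := himg ▸ ⟨htO, hgt⟩
  have hzj : c j * z.2 j + e j = t := by simpa [g] using congrArg (·.2 j) hzt
  have hz0 : z.2 j ∈ Ico 0 1 := by simpa [cubeFactor, hjQ] using (mem_cube_iff.1 hz).2 j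
  linarith [mul_nonneg hc.le hz0.1]

lemma exists_image_Ioo_eq_inter {s : ℝ} {B : Set ℝ} (hB : B ∈ 𝓝 s) :
    ∃ c > 0, ∃ U, IsOpen U ∧ (c * · + s) '' Ioo (-1) 1 = U ∩ B := by
  obtain ⟨c, hc, hball⟩ := Metric.mem_nhds_iff.1 hB
  refine ⟨c, hc, Metric.ball s c, Metric.isOpen_ball, ?_⟩
  rw [inter_eq_left.2 hball, image_affine_Ioo hc, Real.ball_eq_Ioo]
  ring_nf

lemma exists_image_eq_inter_Ico {s : ℝ} (hs : s ∈ Ico 0 1) :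
    ∃ c > 0, ∃ V, IsOpen V ∧
      (c * · + s) '' (if s = 0 then Ico 0 1 else Ioo (-1) 1) = V ∩ Ico 0 1 := by
  rcases eq_or_ne s 0 with rfl | hs0
  · exact ⟨1, one_pos, univ, isOpen_univ, by simp⟩
  · rw [if_neg hs0]
    exact exists_image_Ioo_eq_inter (Ioo_mem_nhds (hs.1.lt_of_ne' hs0) hs.2 |>
      mem_of_superset <| Ioo_subset_Ico_self)

end

/-- For every point `x ∈ □^{p,q}` there is a unique `Q ⊆ {1,…,q}` such that `x` lies in
the image of the deepest stratum of some open rectilinear embedding `□^{p,Q} ↪ □^{p,q}`: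
namely, `Q` is exactly the set of indices of vanishing coordinates of `x` among the
last `q` coordinates. -/
theorem exists_unique_type_of_point (p q : ℕ) (x : Pt p q) (hx : x ∈ cube p q Set.univ)
    (Q : Set (Fin q)) :
    (∃ f : Pt p q → Pt p q, OpenRectEmb p q f Q Set.univ ∧
        x ∈ f '' deepStratum p q Q) ↔ Q = {j | x.2 j = 0} := by
  constructor
  · rintro ⟨f, ⟨⟨a, b, c, e, ha, hc, hf⟩, hsub, O, hO, himg⟩, y, ⟨hy, hy0⟩, rfl⟩
    obtain rfl : f = rectMap a b c e := funext hf
    ext j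
    by_cases hj : j ∈ Q
    · simpa [hj] using rectMap_snd_eq_zero (hc j) hO himg hj hy (hy0 j hj)
    · simpa [hj] using (rectMap_snd_pos (hc j) hsub (mem_univ j) hj hy).ne'
  · rintro rfl
    rw [mem_cube_iff] at hx
    choose a ha U hU hUa using fun i => exists_image_Ioo_eq_inter (isOpen_Ioo.mem_nhds (hx.1 i))
    choose c hc V hV hVc using fun j => exists_image_eq_inter_Ico (by simpa using hx.2 j)
    refine ⟨rectMap a x.1 c x.2, openRectEmb_rectMap ha hc hU hV hUa fun j => ?_, 0, ?_, ?_⟩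
    · simpa [cubeFactor] using hVc j
    · simp [deepStratum, mem_cube_iff, zero_mem_cubeFactor]
    · ext <;> simp [rectMap]
end

section
/- Let P be the poset whose objects are tuples (U_i)_{i∈I} of pairwise disjoint open sub-cubes of □^{p,q} with U_i of type R_i, with a morphism (U_i)_i → (V_i)_i when U_i ⊆ V_i with the same type for all i. For each configuration x = (x_i)_i ∈ Conf_R(□^{p,q}), the full subposet P_x of those tuples (U_i)_i with x_i ∈ (U_i)_{[R_i]} for all i is nonempty and codirected (for any two elements there is a third mapping to both); in particular P_x is cofiltered. -/
open Set

/-- `U` is a sub-cube of `□^{p,q}` of type `R`: the image of an open rectilinear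
embedding `□^{p,R} ↪ □^{p,q}`. -/
def IsSubcubeOfType (p q : ℕ) (U : Set (Pt p q)) (R : Set (Fin q)) : Prop :=
  ∃ f : Pt p q → Pt p q, OpenRectEmb p q f R Set.univ ∧ U = f '' cube p q R

/-- The deepest stratum `U_{[R]}` of a sub-cube `U` of type `R`: the points of `U`
whose coordinates indexed by `R` vanish. -/
def deepIn (p q : ℕ) (U : Set (Pt p q)) (R : Set (Fin q)) : Set (Pt p q) :=
  {y ∈ U | ∀ j ∈ R, y.2 j = 0}

/-- The configuration space `Conf_R(□^{p,q})`. -/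
def ConfSet (p q : ℕ) (ι : Type) (R : ι → Set (Fin q)) : Set (ι → Pt p q) :=
  {x | (∀ i, x i ∈ cube p q Set.univ ∧ ∀ j, ((x i).2 j = 0 ↔ j ∈ R i)) ∧
    Function.Injective x}

open Filter Metric Topology

/-- The small axis-aligned cube of radius `ε` around `z`, of type `R`. -/
def smallCube (p q : ℕ) (z : Pt p q) (R : Set (Fin q)) (ε : ℝ) : Set (Pt p q) :=
  {y | (∀ k, y.1 k ∈ Ioo (z.1 k - ε) (z.1 k + ε)) ∧
    ∀ j, (j ∈ R → y.2 j ∈ Ico (z.2 j) (z.2 j + ε)) ∧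
      (j ∉ R → y.2 j ∈ Ioo (z.2 j - ε) (z.2 j + ε))}

lemma smallCube_image {p q : ℕ} (z : Pt p q) (R : Set (Fin q)) {ε : ℝ} (hε : 0 < ε) :
    (fun y : Pt p q => ((fun k => ε * y.1 k + z.1 k, fun j => ε * y.2 j + z.2 j) : Pt p q))
        '' cube p q R = smallCube p q z R ε := by
  ext y
  constructor
  · rintro ⟨w, hw, rfl⟩
    refine ⟨fun k => ?_, fun j => ⟨fun hj => ?_, fun hj => ?_⟩⟩
    · show ε * w.1 k + z.1 k ∈ Ioo (z.1 k - ε) (z.1 k + ε)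
      have h := hw.1 k; exact ⟨by nlinarith [h.1], by nlinarith [h.2]⟩
    · show ε * w.2 j + z.2 j ∈ Ico (z.2 j) (z.2 j + ε)
      have h := (hw.2 j).1 hj; exact ⟨by nlinarith [h.1], by nlinarith [h.2]⟩
    · show ε * w.2 j + z.2 j ∈ Ioo (z.2 j - ε) (z.2 j + ε)
      have h := (hw.2 j).2 hj; exact ⟨by nlinarith [h.1], by nlinarith [h.2]⟩
  · intro hy
    refine ⟨((fun k => (y.1 k - z.1 k) / ε), fun j => (y.2 j - z.2 j) / ε),
      ⟨fun k => ?_, fun j => ⟨fun hj => ?_, fun hj => ?_⟩⟩, ?_⟩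
    · have h := hy.1 k
      exact ⟨by rw [lt_div_iff₀ hε]; linarith [h.1], by rw [div_lt_one hε]; linarith [h.2]⟩
    · have h := (hy.2 j).1 hj
      exact ⟨div_nonneg (by linarith [h.1]) hε.le, by rw [div_lt_one hε]; linarith [h.2]⟩
    · have h := (hy.2 j).2 hj
      exact ⟨by rw [lt_div_iff₀ hε]; linarith [h.1], by rw [div_lt_one hε]; linarith [h.2]⟩
    · refine Prod.ext ?_ ?_ <;> funext k <;> field_simp <;> ring

lemma smallCube_subset_cube {p q : ℕ} {z : Pt p q} {R : Set (Fin q)} {ε : ℝ}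
    (hε : 0 < ε) (hε1 : ε ≤ 1) (h1 : ∀ k, |z.1 k| + ε ≤ 1)
    (hzR : ∀ j ∈ R, z.2 j = 0) (h2 : ∀ j ∉ R, ε ≤ z.2 j ∧ z.2 j + ε ≤ 1) :
    smallCube p q z R ε ⊆ cube p q Set.univ := by
  intro y hy
  refine ⟨fun k => ?_, fun j => ⟨fun _ => ?_, fun h => absurd (mem_univ j) h⟩⟩
  · have h := hy.1 k
    exact ⟨by nlinarith [neg_abs_le (z.1 k), h.1, h1 k],
      by nlinarith [le_abs_self (z.1 k), h.2, h1 k]⟩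
  · by_cases hj : j ∈ R
    · have h := (hy.2 j).1 hj
      have h0 := hzR j hj
      exact ⟨by rw [← h0]; exact h.1, by have := h.2; rw [h0] at this; linarith⟩
    · have h := (hy.2 j).2 hj
      have h0 := h2 j hj
      exact ⟨by linarith [h.1, h0.1], by linarith [h.2, h0.2]⟩

lemma smallCube_isSubcube {p q : ℕ} {z : Pt p q} {R : Set (Fin q)} {ε : ℝ}
    (hε : 0 < ε) (hε1 : ε ≤ 1) (h1 : ∀ k, |z.1 k| + ε ≤ 1)
    (hzR : ∀ j ∈ R, z.2 j = 0) (h2 : ∀ j ∉ R, ε ≤ z.2 j ∧ z.2 j + ε ≤ 1) :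
    IsSubcubeOfType p q (smallCube p q z R ε) R := by
  have hsub := smallCube_subset_cube hε hε1 h1 hzR h2
  refine ⟨fun y => ((fun k => ε * y.1 k + z.1 k, fun j => ε * y.2 j + z.2 j) : Pt p q),
    ⟨⟨fun _ => ε, z.1, fun _ => ε, z.2, fun _ => hε, fun _ => hε, fun _ => rfl⟩,
      by rw [smallCube_image z R hε]; exact hsub, ?_⟩, (smallCube_image z R hε).symm⟩
  refine ⟨(univ.pi fun k => Ioo (z.1 k - ε) (z.1 k + ε)) ×ˢ
      (univ.pi fun j => Ioo (z.2 j - ε) (z.2 j + ε)),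
    ((isOpen_set_pi finite_univ fun _ _ => isOpen_Ioo).prod
      (isOpen_set_pi finite_univ fun _ _ => isOpen_Ioo)), ?_⟩
  rw [smallCube_image z R hε]
  ext y
  simp only [mem_inter_iff, Set.mem_prod, Set.mem_pi, Set.mem_univ, true_implies]
  constructor
  · intro hy
    refine ⟨⟨fun k => hy.1 k, fun j => ?_⟩, hsub hy⟩
    by_cases hj : j ∈ R
    · have h := (hy.2 j).1 hj
      have h0 := hzR j hj
      exact ⟨by rw [h0]; linarith [h.1, hε], by linarith [h.2]⟩
    · exact (hy.2 j).2 hj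
  · rintro ⟨⟨hO1, hO2⟩, hc⟩
    refine ⟨hO1, fun j => ⟨fun hj => ?_, fun hj => hO2 j⟩⟩
    have h0 := hzR j hj
    have hc2 := (hc.2 j).1 (mem_univ j)
    exact ⟨by rw [h0]; exact hc2.1, (hO2 j).2⟩

lemma mem_smallCube_self {p q : ℕ} (z : Pt p q) (R : Set (Fin q)) {ε : ℝ} (hε : 0 < ε) :
    z ∈ smallCube p q z R ε :=
  ⟨fun k => ⟨by linarith, by linarith⟩,
    fun j => ⟨fun _ => ⟨le_refl _, by linarith⟩, fun _ => ⟨by linarith, by linarith⟩⟩⟩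

lemma smallCube_subset_ball {p q : ℕ} {z : Pt p q} {R : Set (Fin q)} {ε : ℝ} (hε : 0 < ε) :
    smallCube p q z R ε ⊆ Metric.ball z ε := by
  intro y hy
  rw [mem_ball, Prod.dist_eq]
  refine max_lt ?_ ?_
  · rw [dist_pi_lt_iff hε]
    intro k
    rw [Real.dist_eq, abs_sub_lt_iff]
    have h := hy.1 k
    exact ⟨by linarith [h.2], by linarith [h.1]⟩
  · rw [dist_pi_lt_iff hε]
    intro j
    rw [Real.dist_eq, abs_sub_lt_iff]
    by_cases hj : j ∈ R
    · have h := (hy.2 j).1 hj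
      exact ⟨by linarith [h.2], by linarith [h.1]⟩
    · have h := (hy.2 j).2 hj
      exact ⟨by linarith [h.2], by linarith [h.1]⟩

lemma exists_good_tuple (p q : ℕ) (ι : Type) [Fintype ι]
    (R : ι → Set (Fin q)) (x : ι → Pt p q) (hx : x ∈ ConfSet p q ι R)
    (O : ι → Set (Pt p q)) (hO : ∀ i, IsOpen (O i)) (hxO : ∀ i, x i ∈ O i) :
    ∃ W : ι → Set (Pt p q),
      (∀ i, IsSubcubeOfType p q (W i) (R i)) ∧
      (Pairwise fun i j => Disjoint (W i) (W j)) ∧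
      (∀ i, x i ∈ deepIn p q (W i) (R i)) ∧
      ∀ i, W i ⊆ O i ∩ cube p q Set.univ := by
  obtain ⟨hx1, hxinj⟩ := hx
  have hle : ∀ c : ℝ, 0 < c → ∀ᶠ ε in 𝓝[>] (0:ℝ), ε ≤ c := fun c hc =>
    (eventually_le_nhds hc).filter_mono nhdsWithin_le_nhds
  have hev : ∀ᶠ ε in 𝓝[>] (0:ℝ),
      (∀ i, ε ≤ 1 ∧ (∀ k, |(x i).1 k| + ε ≤ 1) ∧
        (∀ j, j ∉ R i → ε ≤ (x i).2 j ∧ (x i).2 j + ε ≤ 1) ∧ Metric.ball (x i) ε ⊆ O i) ∧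
      ∀ i i', i ≠ i' → ε + ε ≤ dist (x i) (x i') := by
    refine (eventually_all.2 fun i => ?_).and
      (eventually_all.2 fun i => eventually_all.2 fun i' => ?_)
    · refine (hle 1 one_pos).and (((eventually_all.2 fun k => ?_).and
        ((eventually_all.2 fun j => ?_).and ?_)))
      · have h := (hx1 i).1.1 k
        have : |(x i).1 k| < 1 := abs_lt.2 ⟨h.1, h.2⟩
        filter_upwards [hle (1 - |(x i).1 k|) (by linarith)] with ε hε
        linarith
      · by_cases hj : j ∈ R i
        · exact Eventually.of_forall fun ε h => absurd hj h
        · have h01 := ((hx1 i).1.2 j).1 (mem_univ j)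
          have hne : (x i).2 j ≠ 0 := fun h => hj (((hx1 i).2 j).1 h)
          have h0 : 0 < (x i).2 j := lt_of_le_of_ne h01.1 (Ne.symm hne)
          filter_upwards [hle ((x i).2 j) h0, hle (1 - (x i).2 j) (by linarith [h01.2])]
            with ε ha hb
          exact fun _ => ⟨ha, by linarith⟩
      · obtain ⟨r, hr, hball⟩ := Metric.isOpen_iff.1 (hO i) (x i) (hxO i)
        filter_upwards [hle r hr] with ε hε
        exact (Metric.ball_subset_ball hε).trans hball
    · by_cases h : i = i'
      · exact Eventually.of_forall fun ε h' => absurd h h'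
      · have hd : 0 < dist (x i) (x i') := dist_pos.2 fun he => h (hxinj he)
        filter_upwards [hle (dist (x i) (x i') / 2) (by linarith)] with ε hε _
        linarith
  obtain ⟨ε, hP, hε0⟩ := (hev.and (eventually_mem_nhdsWithin)).exists
  replace hε0 : (0:ℝ) < ε := hε0
  have hzR : ∀ i, ∀ j ∈ R i, (x i).2 j = 0 := fun i j hj => ((hx1 i).2 j).2 hj
  refine ⟨fun i => smallCube p q (x i) (R i) ε, fun i => ?_, fun i i' hne => ?_,
    fun i => ?_, fun i => ?_⟩
  · exact smallCube_isSubcube hε0 (hP.1 i).1 (hP.1 i).2.1 (hzR i) (hP.1 i).2.2.1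
  · exact (Metric.ball_disjoint_ball (hP.2 i i' hne)).mono
      (smallCube_subset_ball hε0) (smallCube_subset_ball hε0)
  · exact ⟨mem_smallCube_self (x i) (R i) hε0, hzR i⟩
  · intro y hy
    exact ⟨(hP.1 i).2.2.2 (smallCube_subset_ball hε0 hy),
      smallCube_subset_cube hε0 (hP.1 i).1 (hP.1 i).2.1 (hzR i) (hP.1 i).2.2.1 hy⟩

/-- For every configuration `x ∈ Conf_R(□^{p,q})`, the subposet `P_x` of the poset of
tuples of pairwise disjoint sub-cubes `(U_i)` of types `R_i` consisting of those tuples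
with `x_i` in the deepest stratum of `U_i` for all `i`, is nonempty and codirected
(for any two elements there is a third below both); in particular it is cofiltered. -/
theorem subcube_tuples_at_configuration_cofiltered (p q : ℕ) (ι : Type) [Fintype ι]
    (R : ι → Set (Fin q)) (x : ι → Pt p q) (hx : x ∈ ConfSet p q ι R) :
    ({U : ι → Set (Pt p q) |
        (∀ i, IsSubcubeOfType p q (U i) (R i)) ∧
        (Pairwise fun i j => Disjoint (U i) (U j)) ∧
        ∀ i, x i ∈ deepIn p q (U i) (R i)}).Nonempty ∧
    ∀ U ∈ {U : ι → Set (Pt p q) |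
        (∀ i, IsSubcubeOfType p q (U i) (R i)) ∧
        (Pairwise fun i j => Disjoint (U i) (U j)) ∧
        ∀ i, x i ∈ deepIn p q (U i) (R i)},
      ∀ V ∈ {U : ι → Set (Pt p q) |
        (∀ i, IsSubcubeOfType p q (U i) (R i)) ∧
        (Pairwise fun i j => Disjoint (U i) (U j)) ∧
        ∀ i, x i ∈ deepIn p q (U i) (R i)},
      ∃ W ∈ {U : ι → Set (Pt p q) |
        (∀ i, IsSubcubeOfType p q (U i) (R i)) ∧
        (Pairwise fun i j => Disjoint (U i) (U j)) ∧
        ∀ i, x i ∈ deepIn p q (U i) (R i)},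
        (∀ i, W i ⊆ U i) ∧ (∀ i, W i ⊆ V i) := by
  constructor
  · obtain ⟨W, h1, h2, h3, -⟩ := exists_good_tuple p q ι R x hx (fun _ => Set.univ)
      (fun _ => isOpen_univ) (fun _ => mem_univ _)
    exact ⟨W, h1, h2, h3⟩
  · intro U hU V hV
    choose fU hfU hUeq using hU.1
    choose OU hOUopen hOUeq using fun i => (hfU i).2.2
    choose fV hfV hVeq using hV.1
    choose OV hOVopen hOVeq using fun i => (hfV i).2.2
    have hUO : ∀ i, U i = OU i ∩ cube p q Set.univ := fun i => (hUeq i).trans (hOUeq i)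
    have hVO : ∀ i, V i = OV i ∩ cube p q Set.univ := fun i => (hVeq i).trans (hOVeq i)
    have hxU : ∀ i, x i ∈ OU i := fun i => by
      have h := (hU.2.2 i).1; rw [hUO i] at h; exact h.1
    have hxV : ∀ i, x i ∈ OV i := fun i => by
      have h := (hV.2.2 i).1; rw [hVO i] at h; exact h.1
    obtain ⟨W, h1, h2, h3, h4⟩ := exists_good_tuple p q ι R x hx (fun i => OU i ∩ OV i)
      (fun i => (hOUopen i).inter (hOVopen i)) (fun i => ⟨hxU i, hxV i⟩)
    refine ⟨W, ⟨h1, h2, h3⟩, fun i => ?_, fun i => ?_⟩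
    · rw [hUO i]; intro y hy; exact ⟨(h4 i hy).1.1, (h4 i hy).2⟩
    · rw [hVO i]; intro y hy; exact ⟨(h4 i hy).1.2, (h4 i hy).2⟩
end

section
/- Every star-shaped (around the origin) open subset V of ℝ^n is diffeomorphic to ℝ^n; moreover an explicit diffeomorphism is given by v ↦ (1 + (∫₀^{‖v‖} dt/φ(t·v/‖v‖))²) · v (and 0 ↦ 0), where φ : ℝ^n → ℝ_{≥0} is any smooth function with φ^{-1}(0) = ℝ^n \ V. -/
/-!
For a unit vector `u` put `J_u(r) = ∫₀^r dt / φ(t u)`. The map sends `r u` to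
`(1 + J_u(r)²) r u`: it preserves rays and acts on each ray by the increasing function
`r ↦ (1 + J_u(r)²) r`, which vanishes at `0` and is unbounded on `{r ≥ 0 | r u ∈ V}`. Indeed,
either the whole ray lies in `V`, or it leaves `V` first at some `R u`; there `φ` vanishes, so
`φ(t u) ≤ K (R - t)` by the Lipschitz bound and `J_u(r) ≥ log (R / (R - r)) / K → ∞`. Hence the
map is a bijection of `V` onto the whole space.

Smoothness comes from writing the map as `v ↦ (1 + q v) • v` with
`q v = ‖v‖² (∫₀¹ ds / φ(s v))²`, a parametric integral of a smooth integrand. Its derivative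
`h ↦ (1 + q v) h + (Dq(v) h) v` is invertible because `Dq(v) v ≥ 0` (`q` is nondecreasing along
rays), so the inverse is smooth by the inverse function theorem.
-/

open Set Filter Topology MeasureTheory Metric Real
open scoped NNReal

universe u

theorem exists_closedBall_prod_subset_of_isOpen {E Y : Type*} [PseudoMetricSpace E]
    [PseudoMetricSpace Y] {W : Set (E × Y)} {K : Set Y} (hW : IsOpen W) (hK : IsCompact K)
    {x₀ : E} (hx₀ : ∀ s ∈ K, (x₀, s) ∈ W) : ∃ r > 0, closedBall x₀ r ×ˢ K ⊆ W := by
  obtain ⟨δ, hδ, hsub⟩ := (isCompact_singleton.prod hK).exists_thickening_subset_open hW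
    (by rintro ⟨x, s⟩ ⟨rfl, hs⟩; exact hx₀ s hs)
  refine ⟨δ / 2, by positivity, fun p hp =>
    hsub (mem_thickening_iff.2 ⟨(x₀, p.2), ⟨rfl, hp.2⟩, ?_⟩)⟩
  have : dist p (x₀, p.2) = dist p.1 x₀ := by simp [Prod.dist_eq]
  linarith [mem_closedBall.1 hp.1]

section ParametricIntegral

-- One universe for `E` and `F`: the induction below replaces `F` by `E →L[ℝ] F`.
variable {E F : Type u} [NormedAddCommGroup E] [NormedSpace ℝ E] [ProperSpace E]
  [NormedAddCommGroup F] [NormedSpace ℝ F] {ψ : E × ℝ → F} {W : Set (E × ℝ)} {a b : ℝ}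

theorem hasFDerivAt_intervalIntegral_of_contDiffOn (hW : IsOpen W)
    (hψ : ContDiffOn ℝ 1 ψ W) {x₀ : E} (hx₀ : ∀ s ∈ uIcc a b, (x₀, s) ∈ W) :
    HasFDerivAt (fun x => ∫ s in a..b, ψ (x, s))
      (∫ s in a..b, (fderiv ℝ ψ (x₀, s)).comp (ContinuousLinearMap.inl ℝ E ℝ)) x₀ := by
  set ψ' : E × ℝ → E →L[ℝ] F := fun p => (fderiv ℝ ψ p).comp (ContinuousLinearMap.inl ℝ E ℝ)
  have hψ' : ContinuousOn ψ' W :=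
    (hψ.continuousOn_fderiv_of_isOpen hW le_rfl).clm_comp continuousOn_const
  obtain ⟨r, hr, hsub⟩ := exists_closedBall_prod_subset_of_isOpen hW isCompact_uIcc hx₀
  obtain ⟨C, hC⟩ := ((isCompact_closedBall x₀ r).prod isCompact_uIcc).exists_bound_of_continuousOn
    (hψ'.mono hsub)
  have hslice : ∀ x ∈ closedBall x₀ r, MapsTo (fun s => (x, s)) (uIcc a b) W :=
    fun x hx s hs => hsub ⟨hx, hs⟩
  have hline : ∀ x : E, ContinuousOn (fun s : ℝ => (x, s)) (uIcc a b) :=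
    fun x => (continuous_const.prodMk continuous_id).continuousOn
  have hx₀r := mem_closedBall_self (x := x₀) hr.le
  apply intervalIntegral.hasFDerivAt_integral_of_dominated_of_fderiv_le
    (F' := fun x s => ψ' (x, s)) (bound := fun _ => C) (ball_mem_nhds x₀ hr)
  · filter_upwards [closedBall_mem_nhds x₀ hr] with x hx
    exact ((hψ.continuousOn.comp (hline x) (hslice x hx)).mono uIoc_subset_uIcc)
      |>.aestronglyMeasurable measurableSet_uIoc
  · exact (hψ.continuousOn.comp (hline x₀) (hslice x₀ hx₀r)).intervalIntegrable
  · exact ((hψ'.comp (hline x₀) (hslice x₀ hx₀r)).mono uIoc_subset_uIcc).aestronglyMeasurable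
      measurableSet_uIoc
  · exact ae_of_all _ fun s hs x hx => hC (x, s) ⟨ball_subset_closedBall hx, uIoc_subset_uIcc hs⟩
  · exact intervalIntegrable_const
  · refine ae_of_all _ fun s hs x hx => ?_
    have hxs := hslice x (ball_subset_closedBall hx) (uIoc_subset_uIcc hs)
    exact ((hψ.differentiableOn one_ne_zero).differentiableAt (hW.mem_nhds hxs)).hasFDerivAt.comp
      x (hasFDerivAt_prodMk_left x s)

theorem contDiffOn_intervalIntegral_of_contDiffOn (hW : IsOpen W)
    (hψ : ContDiffOn ℝ (⊤ : ℕ∞) ψ W) {U : Set E} (hU : IsOpen U)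
    (hUW : ∀ x ∈ U, ∀ s ∈ uIcc a b, (x, s) ∈ W) :
    ContDiffOn ℝ (⊤ : ℕ∞) (fun x => ∫ s in a..b, ψ (x, s)) U := by
  refine contDiffOn_infty.2 fun k => ?_
  induction k generalizing F with
  | zero =>
    exact contDiffOn_zero.2 fun x hx =>
      (hasFDerivAt_intervalIntegral_of_contDiffOn hW (hψ.of_le (by simp)) (hUW x hx))
        |>.continuousAt.continuousWithinAt
  | succ k ih =>
    have hderiv := fun x hx =>
      hasFDerivAt_intervalIntegral_of_contDiffOn hW (hψ.of_le (by simp)) (hUW x hx)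
    rw [Nat.cast_succ, contDiffOn_succ_iff_fderiv_of_isOpen hU]
    refine ⟨fun x hx => (hderiv x hx).differentiableAt.differentiableWithinAt, by simp, ?_⟩
    refine (ih ((hψ.fderiv_of_isOpen hW (by simp)).clm_comp contDiffOn_const)).congr
      fun x hx => (hderiv x hx).fderiv

end ParametricIntegral

section RadialRescaling

variable {E : Type*} [NormedAddCommGroup E] [NormedSpace ℝ E] {V : Set E} {q : E → ℝ}

theorem injOn_one_add_smul_of_monotoneOn (hq : ∀ v ∈ V, 0 ≤ q v)
    (hmono : ∀ v ∈ V, MonotoneOn (fun t : ℝ => q (t • v)) (Icc 0 1)) :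
    InjOn (fun v => (1 + q v) • v) V := by
  suffices h : ∀ v ∈ V, ∀ w ∈ V, (1 + q v) • v = (1 + q w) • w → 1 + q v ≤ 1 + q w → v = w by
    intro v hv w hw hvw
    rcases le_total (1 + q v) (1 + q w) with hle | hle
    exacts [h v hv w hw hvw hle, (h w hw v hv hvw.symm hle).symm]
  intro v hv w hw hvw hle
  have hw0 : 0 < 1 + q w := by linarith [hq w hw]
  set c := (1 + q w)⁻¹ * (1 + q v)
  have hwc : w = c • v := by
    rw [mul_smul, hvw, inv_smul_smul₀ hw0.ne']
  have hc : c ∈ Icc (0 : ℝ) 1 :=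
    ⟨by have := hq v hv; positivity, by rwa [inv_mul_le_one₀ hw0]⟩
  have hqwv : q w ≤ q v := by
    simpa [← hwc] using hmono v hv hc ⟨zero_le_one, le_rfl⟩ hc.2
  have hc1 : c = 1 := le_antisymm hc.2 (by rw [one_le_inv_mul₀ hw0]; linarith)
  rw [hwc, hc1, one_smul]

theorem injective_smul_id_add_smulRight {a : ℝ} {ℓ : E →L[ℝ] ℝ} {v : E} (ha : a ≠ 0)
    (hav : a + ℓ v ≠ 0) : Function.Injective (a • ContinuousLinearMap.id ℝ E + ℓ.smulRight v) := by
  rw [injective_iff_map_eq_zero]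
  intro h hh
  simp only [add_apply, smul_apply, ContinuousLinearMap.id_apply,
    ContinuousLinearMap.smulRight_apply] at hh
  have hℓ : ℓ h * (a + ℓ v) = 0 := by
    simpa [mul_add, mul_comm] using congr_arg ℓ hh
  have hℓh : ℓ h = 0 := (mul_eq_zero.1 hℓ).resolve_right hav
  rw [hℓh, zero_smul, add_zero, smul_eq_zero] at hh
  exact hh.resolve_left ha

theorem fderiv_apply_self_nonneg_of_monotoneOn {v : E} (hd : DifferentiableAt ℝ q v)
    (hmono : MonotoneOn (fun t : ℝ => q (t • v)) (Icc 0 1)) : 0 ≤ fderiv ℝ q v v := by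
  have hray : HasDerivAt (fun t : ℝ => q (t • v)) (fderiv ℝ q v v) 1 := by
    have hline : HasDerivAt (fun t : ℝ => t • v) v 1 := by
      simpa using (hasDerivAt_id (1 : ℝ)).smul_const v
    exact hd.hasFDerivAt.comp_hasDerivAt_of_eq 1 hline (one_smul ℝ v).symm
  rw [← (hray.hasDerivWithinAt (s := Icc 0 1)).derivWithin
    (uniqueDiffOn_Icc zero_lt_one 1 (right_mem_Icc.2 zero_le_one))]
  exact hmono.derivWithin_nonneg

theorem exists_hasFDerivAt_one_add_smul_of_monotoneOn [FiniteDimensional ℝ E] {v : E}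
    (hqv : 0 ≤ q v) (hd : DifferentiableAt ℝ q v)
    (hmono : MonotoneOn (fun t : ℝ => q (t • v)) (Icc 0 1)) :
    ∃ L : E ≃L[ℝ] E, HasFDerivAt (fun x => (1 + q x) • x) (L : E →L[ℝ] E) v := by
  set L := (1 + q v) • ContinuousLinearMap.id ℝ E + (fderiv ℝ q v).smulRight v
  have hL : Function.Injective L := injective_smul_id_add_smulRight (by linarith)
    (by linarith [fderiv_apply_self_nonneg_of_monotoneOn hd hmono])
  refine ⟨(LinearEquiv.ofInjectiveEndo (L : E →ₗ[ℝ] E) hL).toContinuousLinearEquiv, ?_⟩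
  exact (hd.hasFDerivAt.const_add 1).smul (hasFDerivAt_id v)

theorem StarConvex.smul_mem_of_smul_mem (hV : StarConvex ℝ 0 V) {u : E} {r₀ r : ℝ}
    (hr₀ : r₀ • u ∈ V) (hr : r ∈ Icc 0 r₀) : r • u ∈ V := by
  rcases hr.1.eq_or_lt with rfl | hr0
  · simpa using hV.smul_mem hr₀ le_rfl (zero_le_one)
  have hr₀pos := hr0.trans_le hr.2
  simpa [smul_smul, div_mul_cancel₀ _ hr₀pos.ne'] using
    hV.smul_mem hr₀ (div_nonneg hr.1 hr₀pos.le) ((div_le_one hr₀pos).2 hr.2)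

theorem surjOn_one_add_smul_of_forall_exists_le (hV : StarConvex ℝ 0 V) (h0 : (0 : E) ∈ V)
    (hq : ContinuousOn q V)
    (hray : ∀ u : E, ‖u‖ = 1 → ∀ M : ℝ, ∃ r ≥ 0, r • u ∈ V ∧ M ≤ (1 + q (r • u)) * r) :
    SurjOn (fun v => (1 + q v) • v) V univ := by
  intro y _
  rcases eq_or_ne y 0 with rfl | hy
  · exact ⟨0, h0, by simp⟩
  set u := ‖y‖⁻¹ • y
  obtain ⟨r₀, hr₀, hr₀V, hr₀y⟩ := hray u (norm_smul_inv_norm hy) ‖y‖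
  have hsegment : ∀ r ∈ Icc 0 r₀, r • u ∈ V := fun r hr => hV.smul_mem_of_smul_mem hr₀V hr
  have hcont : ContinuousOn (fun r : ℝ => (1 + q (r • u)) * r) (Icc 0 r₀) :=
    ((continuousOn_const.add (hq.comp (continuous_id.smul continuous_const).continuousOn
      hsegment)).mul continuousOn_id)
  obtain ⟨r, hr, hry⟩ := intermediate_value_Icc hr₀ hcont ⟨by simp, hr₀y⟩
  refine ⟨r • u, hsegment r hr, ?_⟩
  simp only at hry ⊢
  rw [smul_smul, hry, smul_inv_smul₀ (norm_ne_zero_iff.2 hy)]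

end RadialRescaling

theorem tendsto_log_sub_log_sub_nhdsLT (R : ℝ) :
    Tendsto (fun r => log R - log (R - r)) (𝓝[<] R) atTop := by
  have hsub : Tendsto (fun r => R - r) (𝓝[<] R) (𝓝[>] 0) :=
    tendsto_nhdsWithin_of_tendsto_nhds_of_eventually_within _
      (by simpa using ((continuous_sub_left R).tendsto R).mono_left nhdsWithin_le_nhds)
      (eventually_nhdsWithin_of_forall fun r (hr : r < R) => show R - r ∈ Ioi 0 from sub_pos.2 hr)
  simp_rw [sub_eq_add_neg (log R)]
  exact tendsto_atTop_add_const_left _ (log R)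
    (tendsto_neg_atBot_atTop.comp (tendsto_log_nhdsGT_zero.comp hsub))

theorem tendsto_integral_inv_nhdsLT_of_lipschitzOnWith {g : ℝ → ℝ} {R : ℝ} {K : ℝ≥0}
    (hR : 0 < R) (hg : LipschitzOnWith K g (Icc 0 R)) (hgR : g R = 0)
    (hpos : ∀ t ∈ Ico 0 R, 0 < g t) :
    Tendsto (fun r => ∫ t in (0 : ℝ)..r, (g t)⁻¹) (𝓝[<] R) atTop := by
  set C : ℝ := K + 1
  have hC : 0 < C := by positivity
  have hle : ∀ t ∈ Icc 0 R, g t ≤ C * (R - t) := by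
    intro t ht
    have hdist := hg.dist_le_mul t ht R (right_mem_Icc.2 hR.le)
    rw [hgR, Real.dist_eq, Real.dist_eq, sub_zero, abs_sub_comm t,
      abs_of_nonneg (sub_nonneg.2 ht.2)] at hdist
    calc g t ≤ K * (R - t) := (le_abs_self _).trans hdist
      _ ≤ C * (R - t) := mul_le_mul_of_nonneg_right (by simp [C]) (sub_nonneg.2 ht.2)
  refine tendsto_atTop_mono' _ ?_
    ((tendsto_log_sub_log_sub_nhdsLT R).const_mul_atTop (inv_pos.2 hC))
  filter_upwards [Ioo_mem_nhdsLT hR] with r hr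
  have hrR : Icc 0 r ⊆ Ico 0 R := Icc_subset_Ico_right hr.2
  have hint : ∫ t in (0 : ℝ)..r, (C * (R - t))⁻¹ = C⁻¹ * (log R - log (R - r)) := by
    simp_rw [mul_inv]
    rw [intervalIntegral.integral_const_mul, intervalIntegral.integral_comp_sub_left (fun x => x⁻¹),
      sub_zero, integral_inv_of_pos (by linarith [hr.2]) hR, log_div hR.ne' (by linarith [hr.2])]
  rw [← hint]
  refine intervalIntegral.integral_mono_on hr.1.le ?_ ?_ fun t ht =>
    inv_anti₀ (hpos t (hrR ht)) (hle t ⟨ht.1, ht.2.trans hr.2.le⟩)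
  all_goals refine ContinuousOn.intervalIntegrable ?_
  all_goals rw [uIcc_of_le hr.1.le]
  · exact (continuousOn_const.mul (continuousOn_const.sub continuousOn_id)).inv₀
      fun t ht => (mul_pos hC (sub_pos.2 (hrR ht).2)).ne'
  · exact (hg.continuousOn.mono (hrR.trans Ico_subset_Icc_self)).inv₀
      fun t ht => (hpos t (hrR ht)).ne'

theorem contDiff_invFunOn_of_hasFDerivAt_equiv {E F : Type*} [NormedAddCommGroup E]
    [NormedSpace ℝ E] [CompleteSpace E] [NormedAddCommGroup F] [NormedSpace ℝ F]
    {f : E → F} {V : Set E} {n : WithTop ℕ∞} (hn : n ≠ 0) (hV : IsOpen V)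
    (hf : ContDiffOn ℝ n f V) (hinj : InjOn f V) (hsurj : SurjOn f V univ)
    (hderiv : ∀ v ∈ V, ∃ L : E ≃L[ℝ] F, HasFDerivAt f (L : E →L[ℝ] F) v) :
    ContDiff ℝ n (Function.invFunOn f V) := by
  refine contDiff_iff_contDiffAt.2 fun y => ?_
  set g := Function.invFunOn f V
  have hgV : g y ∈ V := hsurj.mapsTo_invFunOn trivial
  have hfg : f (g y) = y := hsurj.rightInvOn_invFunOn trivial
  obtain ⟨L, hL⟩ := hderiv (g y) hgV
  have hfC : ContDiffAt ℝ n f (g y) := hf.contDiffAt (hV.mem_nhds hgV)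
  set ψ := hfC.localInverse hL hn
  have hψ : ContDiffAt ℝ n ψ (f (g y)) := hfC.to_localInverse hL hn
  have hψV : ∀ᶠ z in 𝓝 (f (g y)), ψ z ∈ V :=
    hψ.continuousAt.preimage_mem_nhds (by
      rw [show ψ (f (g y)) = g y from hfC.localInverse_apply_image hL hn]
      exact hV.mem_nhds hgV)
  have hfψ : ∀ᶠ z in 𝓝 (f (g y)), f (ψ z) = z :=
    (hfC.hasStrictFDerivAt' hL hn).eventually_right_inverse
  have hgψ : g =ᶠ[𝓝 (f (g y))] ψ := by
    filter_upwards [hψV, hfψ] with z hzV hz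
    exact hinj (hsurj.mapsTo_invFunOn trivial) hzV
      (by rw [hz]; exact hsurj.rightInvOn_invFunOn trivial)
  rw [← hfg]
  exact hψ.congr_of_eventuallyEq hgψ

section RadialStretch

variable {E : Type} [NormedAddCommGroup E] {V : Set E} {φ : E → ℝ}

noncomputable def rayIntegral [NormedSpace ℝ E] (φ : E → ℝ) (v : E) : ℝ :=
  ∫ s in (0 : ℝ)..1, (φ (s • v))⁻¹

noncomputable def radialStretch [NormedSpace ℝ E] (φ : E → ℝ) (v : E) : ℝ :=
  ‖v‖ ^ 2 * rayIntegral φ v ^ 2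

section NormedSpace

variable [NormedSpace ℝ E]

theorem radialStretch_nonneg (φ : E → ℝ) (v : E) : 0 ≤ radialStretch φ v := by
  unfold radialStretch
  positivity

theorem integral_inv_comp_smul (φ : E → ℝ) (u : E) (r : ℝ) :
    ∫ t in (0 : ℝ)..r, (φ (t • u))⁻¹ = r * rayIntegral φ (r • u) := by
  simpa [rayIntegral, smul_smul] using
    (intervalIntegral.mul_integral_comp_mul_right (a := 0) (b := 1)
      (f := fun t => (φ (t • u))⁻¹) r).symm

theorem radialStretch_smul (φ : E → ℝ) (u : E) (r : ℝ) :
    radialStretch φ (r • u) = ‖u‖ ^ 2 * (∫ t in (0 : ℝ)..r, (φ (t • u))⁻¹) ^ 2 := by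
  rw [integral_inv_comp_smul, radialStretch, norm_smul, Real.norm_eq_abs, mul_pow, mul_pow,
    sq_abs]
  ring

theorem one_add_integral_sq_smul_eq (φ : E → ℝ) (v : E) :
    (1 + (∫ t in (0 : ℝ)..‖v‖, (φ ((t / ‖v‖) • v))⁻¹) ^ 2) • v = (1 + radialStretch φ v) • v := by
  rcases eq_or_ne v 0 with rfl | hv
  · simp
  have hu : ‖‖v‖⁻¹ • v‖ = 1 := norm_smul_inv_norm hv
  have := radialStretch_smul φ (‖v‖⁻¹ • v) ‖v‖
  rw [smul_inv_smul₀ (norm_ne_zero_iff.2 hv), hu] at this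
  simp_rw [this, one_pow, one_mul, smul_smul, div_eq_mul_inv]

theorem contDiffOn_rayIntegral [ProperSpace E] (hV : IsOpen V) (hstar : StarConvex ℝ 0 V)
    (hφ : ContDiff ℝ (⊤ : ℕ∞) φ) (hpos : ∀ x ∈ V, φ x ≠ 0) :
    ContDiffOn ℝ (⊤ : ℕ∞) (rayIntegral φ) V := by
  have hsmul : ContDiff ℝ (⊤ : ℕ∞) fun p : E × ℝ => p.2 • p.1 := contDiff_snd.smul contDiff_fst
  refine contDiffOn_intervalIntegral_of_contDiffOn (hV.preimage hsmul.continuous)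
    ((hφ.comp hsmul).contDiffOn.inv fun p hp => hpos _ hp) hV fun x hx s hs => ?_
  rw [uIcc_of_le zero_le_one] at hs
  exact hstar.smul_mem hx hs.1 hs.2

theorem monotoneOn_radialStretch_smul (hstar : StarConvex ℝ 0 V) (hφ : Continuous φ)
    (hpos : ∀ x ∈ V, 0 < φ x) {v : E} (hv : v ∈ V) :
    MonotoneOn (fun t : ℝ => radialStretch φ (t • v)) (Icc 0 1) := by
  have hsegment : ∀ t ∈ Icc (0 : ℝ) 1, 0 < φ (t • v) := fun t ht =>
    hpos _ (hstar.smul_mem hv ht.1 ht.2)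
  intro s hs t ht hst
  simp only [radialStretch_smul]
  have hint : IntervalIntegrable (fun τ => (φ (τ • v))⁻¹) volume 0 t := by
    refine ContinuousOn.intervalIntegrable ((hφ.comp (continuous_id.smul
      continuous_const)).continuousOn.inv₀ fun τ hτ => (hsegment τ ?_).ne')
    rw [uIcc_of_le ht.1] at hτ
    exact ⟨hτ.1, hτ.2.trans ht.2⟩
  have hnonneg : ∀ τ ∈ Icc 0 t, 0 ≤ (φ (τ • v))⁻¹ := fun τ hτ =>
    (inv_pos.2 (hsegment τ ⟨hτ.1, hτ.2.trans ht.2⟩)).le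
  have hmono : ∫ τ in (0 : ℝ)..s, (φ (τ • v))⁻¹ ≤ ∫ τ in (0 : ℝ)..t, (φ (τ • v))⁻¹ :=
    intervalIntegral.integral_mono_interval le_rfl hs.1 hst
      ((ae_restrict_iff' measurableSet_Ioc).2 (ae_of_all _ fun τ hτ =>
        hnonneg τ (Ioc_subset_Icc_self hτ))) hint
  have hJs : 0 ≤ ∫ τ in (0 : ℝ)..s, (φ (τ • v))⁻¹ :=
    intervalIntegral.integral_nonneg hs.1 fun τ hτ => hnonneg τ ⟨hτ.1, hτ.2.trans hst⟩
  gcongr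

theorem exists_first_smul_notMem (hV : IsOpen V) (h0 : (0 : E) ∈ V) {u : E}
    (h : ∃ r : ℝ, 0 ≤ r ∧ r • u ∉ V) :
    ∃ R : ℝ, 0 < R ∧ R • u ∉ V ∧ ∀ r ∈ Ico 0 R, r • u ∈ V := by
  set S := {r : ℝ | 0 ≤ r ∧ r • u ∉ V}
  have hS : IsClosed S :=
    isClosed_Ici.inter (hV.isClosed_compl.preimage (continuous_id.smul continuous_const))
  have hbdd : BddBelow S := ⟨0, fun r hr => hr.1⟩
  have hR : sInf S ∈ S := hS.csInf_mem h hbdd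
  refine ⟨sInf S, hR.1.lt_of_ne ?_, hR.2, fun r hr => ?_⟩
  · rintro h
    exact hR.2 (by rw [← h, zero_smul]; exact h0)
  · by_contra hru
    exact (csInf_le hbdd ⟨hr.1, hru⟩).not_gt hr.2

theorem exists_le_one_add_radialStretch_smul_mul (hV : IsOpen V) (h0 : (0 : E) ∈ V)
    (hφ : ContDiff ℝ 1 φ) (hpos : ∀ x ∈ V, 0 < φ x) (hzero : ∀ x ∉ V, φ x = 0) {u : E}
    (hu : ‖u‖ = 1) (M : ℝ) : ∃ r ≥ 0, r • u ∈ V ∧ M ≤ (1 + radialStretch φ (r • u)) * r := by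
  by_cases hray : ∀ r : ℝ, 0 ≤ r → r • u ∈ V
  · refine ⟨max M 0, le_max_right _ _, hray _ (le_max_right _ _), ?_⟩
    nlinarith [le_max_left M 0, le_max_right M 0, radialStretch_nonneg φ (max M 0 • u)]
  push Not at hray
  obtain ⟨R, hR, hRV, hIco⟩ := exists_first_smul_notMem hV h0 hray
  obtain ⟨K, hK⟩ := (hφ.comp (contDiff_id.smul contDiff_const)).contDiffOn.exists_lipschitzOnWith
    one_ne_zero (convex_Icc 0 R) isCompact_Icc
  have hJ := tendsto_integral_inv_nhdsLT_of_lipschitzOnWith hR hK (hzero _ hRV)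
    fun t ht => hpos _ (hIco t ht)
  have hgrowth : Tendsto (fun r => (1 + radialStretch φ (r • u)) * r) (𝓝[<] R) atTop := by
    simp_rw [radialStretch_smul, hu, one_pow, one_mul]
    exact (tendsto_atTop_add_const_left _ 1 ((tendsto_pow_atTop two_ne_zero).comp hJ)).atTop_mul_pos
      hR (tendsto_nhdsWithin_of_tendsto_nhds tendsto_id)
  obtain ⟨r, hrM, hr⟩ := ((hgrowth.eventually_ge_atTop M).and (Ioo_mem_nhdsLT hR)).exists
  exact ⟨r, hr.1.le, hIco r ⟨hr.1.le, hr.2⟩, hrM⟩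

end NormedSpace

theorem contDiffOn_radialStretch [InnerProductSpace ℝ E] [ProperSpace E] (hV : IsOpen V)
    (hstar : StarConvex ℝ 0 V) (hφ : ContDiff ℝ (⊤ : ℕ∞) φ) (hpos : ∀ x ∈ V, φ x ≠ 0) :
    ContDiffOn ℝ (⊤ : ℕ∞) (radialStretch φ) V :=
  (contDiff_norm_sq ℝ).contDiffOn.mul ((contDiffOn_rayIntegral hV hstar hφ hpos).pow 2)

end RadialStretch

/-- Every open subset `V ⊆ ℝ^n` which is star-shaped around the origin is diffeomorphic
to `ℝ^n`, via the explicit radial map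
`v ↦ (1 + (∫₀^{‖v‖} dt / φ(t·v/‖v‖))²) • v` (sending `0 ↦ 0`), where `φ : ℝ^n → ℝ_{≥0}`
is any smooth function with `φ⁻¹(0) = ℝ^n \ V`. -/
theorem starShaped_open_diffeo_euclidean (n : ℕ)
    (V : Set (EuclideanSpace ℝ (Fin n))) (hVopen : IsOpen V)
    (h0 : (0 : EuclideanSpace ℝ (Fin n)) ∈ V)
    (hstar : ∀ v ∈ V, ∀ t : ℝ, t ∈ Icc (0 : ℝ) 1 → t • v ∈ V)
    (φ : EuclideanSpace ℝ (Fin n) → ℝ) (hφ : ContDiff ℝ (⊤ : ℕ∞) φ)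
    (hφnn : ∀ x, 0 ≤ φ x) (hφ0 : ∀ x, φ x = 0 ↔ x ∉ V) :
    ContDiffOn ℝ (⊤ : ℕ∞)
      (fun v => (1 + (∫ t in (0 : ℝ)..‖v‖, (φ ((t / ‖v‖) • v))⁻¹) ^ 2) • v) V ∧
    Set.BijOn
      (fun v => (1 + (∫ t in (0 : ℝ)..‖v‖, (φ ((t / ‖v‖) • v))⁻¹) ^ 2) • v) V Set.univ ∧
    ∃ g' : EuclideanSpace ℝ (Fin n) → EuclideanSpace ℝ (Fin n),
      ContDiff ℝ (⊤ : ℕ∞) g' ∧ (∀ y, g' y ∈ V) ∧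
      (∀ v ∈ V,
        g' ((1 + (∫ t in (0 : ℝ)..‖v‖, (φ ((t / ‖v‖) • v))⁻¹) ^ 2) • v) = v) ∧
      (∀ y, (1 + (∫ t in (0 : ℝ)..‖g' y‖, (φ ((t / ‖g' y‖) • g' y))⁻¹) ^ 2) • g' y = y) := by
  simp only [one_add_integral_sq_smul_eq]
  have hstarConvex : StarConvex ℝ 0 V :=
    starConvex_zero_iff.2 fun v hv t ht₀ ht₁ => hstar v hv t ⟨ht₀, ht₁⟩
  have hpos : ∀ x ∈ V, 0 < φ x := fun x hx => (hφnn x).lt_of_ne' fun h => (hφ0 x).1 h hx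
  have hq := contDiffOn_radialStretch hVopen hstarConvex hφ fun x hx => (hpos x hx).ne'
  set f := fun v => (1 + radialStretch φ v) • v
  have hf : ContDiffOn ℝ (⊤ : ℕ∞) f V := (contDiffOn_const.add hq).smul contDiffOn_id
  have hmono : ∀ v ∈ V, MonotoneOn (fun t : ℝ => radialStretch φ (t • v)) (Icc 0 1) :=
    fun v hv => monotoneOn_radialStretch_smul hstarConvex hφ.continuous hpos hv
  have hinj : InjOn f V :=
    injOn_one_add_smul_of_monotoneOn (fun v _ => radialStretch_nonneg φ v) hmono
  have hsurj : SurjOn f V univ :=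
    surjOn_one_add_smul_of_forall_exists_le hstarConvex h0 hq.continuousOn fun u hu =>
      exists_le_one_add_radialStretch_smul_mul hVopen h0 (hφ.of_le (by simp)) hpos
        (fun x hx => (hφ0 x).2 hx) hu
  have hderiv : ∀ v ∈ V, ∃ L : EuclideanSpace ℝ (Fin n) ≃L[ℝ] EuclideanSpace ℝ (Fin n),
      HasFDerivAt f (L : EuclideanSpace ℝ (Fin n) →L[ℝ] EuclideanSpace ℝ (Fin n)) v := fun v hv =>
    exists_hasFDerivAt_one_add_smul_of_monotoneOn (radialStretch_nonneg φ v)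
      ((hq.contDiffAt (hVopen.mem_nhds hv)).differentiableAt (by simp)) (hmono v hv)
  exact ⟨hf, ⟨mapsTo_univ _ _, hinj, hsurj⟩, Function.invFunOn f V,
    contDiff_invFunOn_of_hasFDerivAt_equiv (by simp) hVopen hf hinj hsurj hderiv,
    fun _ => hsurj.mapsTo_invFunOn trivial, fun _ hv => hinj.leftInvOn_invFunOn hv,
    fun _ => hsurj.rightInvOn_invFunOn trivial⟩
end
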